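/- arXiv:math/0601044 — 3 statements merged into one kernel-verified Lean document; each statement's English description precedes it below -/
import Mathlib

section
/- The upper semicontinuous function f = χ_{{0} ∪ ⋃_{n≥0} [3/2^{n+2}, 1/2^n]} on ℝ satisfies Mf(0) ≤ 1/2 while limsup_{x→0} Mf(x) = 1; hence Mf is discontinuous at 0. -/
open MeasureTheory Set Filter ENNReal NNReal

/-- Uncentered Hardy-Littlewood maximal function of `f` relative to the interval `I`:
supremum of averages of `|f|` over subintervals of `I` containing `x`. -/
noncomputable def mf (I : Set ℝ) (f : ℝ → ℝ) (x : ℝ) : ℝ :=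
  sSup {r : ℝ | ∃ a b : ℝ, a < b ∧ Set.Icc a b ⊆ I ∧ x ∈ Set.Icc a b ∧
    r = (∫ y in Set.Icc a b, |f y|) / (b - a)}

namespace Stmt14Aux

def SS : Set ℝ := {0} ∪ ⋃ n : ℕ, Set.Icc (3 / 2 ^ (n + 2)) (1 / 2 ^ n)

noncomputable def ff : ℝ → ℝ := Set.indicator SS (fun _ => (1 : ℝ))

lemma SS_meas : MeasurableSet SS :=
  (measurableSet_singleton 0).union (MeasurableSet.iUnion fun _ => measurableSet_Icc)

lemma SS_sub : SS ⊆ Set.Icc 0 1 := by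
  rintro x (hx | hx)
  · simp at hx; simp [hx]
  · simp only [Set.mem_iUnion] at hx
    obtain ⟨n, h1, h2⟩ := hx
    constructor
    · have : (0:ℝ) < 3 / 2 ^ (n+2) := by positivity
      linarith
    · calc x ≤ 1 / 2^n := h2
        _ ≤ 1 := by
          rw [div_le_one (by positivity)]
          exact one_le_pow₀ one_le_two

lemma integral_abs_ff (a b : ℝ) :
    (∫ y in Set.Icc a b, |ff y|) = (volume (SS ∩ Set.Icc a b)).toReal := by
  have h1 : ∀ y, |SS.indicator (fun _ => (1:ℝ)) y| = SS.indicator (fun _ => (1:ℝ)) y := fun y =>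
    abs_of_nonneg (Set.indicator_nonneg (fun _ _ => zero_le_one) y)
  simp only [ff, h1]
  rw [MeasureTheory.setIntegral_indicator SS_meas]
  simp [MeasureTheory.setIntegral_const, Set.inter_comm]
  rfl

lemma vol_le (a b : ℝ) : volume (SS ∩ Set.Icc a b) ≤ ENNReal.ofReal (b - a) := by
  calc volume (SS ∩ Set.Icc a b) ≤ volume (Set.Icc a b) := measure_mono inter_subset_right
    _ = ENNReal.ofReal (b - a) := Real.volume_Icc

lemma vol_tail (m : ℕ) :
    volume (SS ∩ Set.Icc 0 ((1:ℝ) / 2 ^ m)) ≤ ENNReal.ofReal (1 / 2 ^ (m + 1)) := by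
  have hsub : SS ∩ Set.Icc 0 ((1:ℝ) / 2 ^ m) ⊆
      {0} ∪ ⋃ k : ℕ, Set.Icc ((3:ℝ) / 2 ^ (m + k + 2)) (1 / 2 ^ (m + k)) := by
    rintro x ⟨hxS, hx0, hxb⟩
    rcases hxS with h | h
    · exact Or.inl h
    · simp only [Set.mem_iUnion, Set.mem_Icc] at h
      obtain ⟨n, h1, h2⟩ := h
      right
      simp only [Set.mem_iUnion, Set.mem_Icc]
      have hnm : m ≤ n := by
        by_contra hc
        push_neg at hc
        have hc' : n + 1 ≤ m := hc
        have hC : (1:ℝ)/2^m < 3/2^(n+2) := by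
          rw [div_lt_div_iff₀ (by positivity) (by positivity)]
          have hpe : (2:ℝ)^(n+2) ≤ 2^(m+1) := pow_le_pow_right₀ one_le_two (by omega)
          have h2m : (2:ℝ)^(m+1) = 2*2^m := by ring
          nlinarith [pow_pos (by norm_num : (0:ℝ)<2) m]
        linarith
      refine ⟨n - m, ?_, ?_⟩
      · rwa [Nat.add_sub_cancel' hnm]
      · rwa [Nat.add_sub_cancel' hnm]
  have hsummable : Summable (fun k : ℕ => ((1:ℝ)/2)^(m+k+2)) := by
    have h := (summable_geometric_of_lt_one (by norm_num : (0:ℝ) ≤ 1/2)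
      (by norm_num : (1:ℝ)/2 < 1)).mul_left (((1:ℝ)/2)^(m+2))
    refine h.congr fun k => ?_
    rw [← pow_add]; congr 1; omega
  calc volume (SS ∩ Set.Icc 0 ((1:ℝ) / 2 ^ m))
      ≤ volume (({0} : Set ℝ) ∪ ⋃ k : ℕ, Set.Icc ((3:ℝ) / 2 ^ (m + k + 2)) (1 / 2 ^ (m + k))) :=
        measure_mono hsub
    _ ≤ volume ({0} : Set ℝ) +
        volume (⋃ k : ℕ, Set.Icc ((3:ℝ) / 2 ^ (m + k + 2)) (1 / 2 ^ (m + k))) :=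
        measure_union_le _ _
    _ = volume (⋃ k : ℕ, Set.Icc ((3:ℝ) / 2 ^ (m + k + 2)) (1 / 2 ^ (m + k))) := by
        simp
    _ ≤ ∑' k : ℕ, volume (Set.Icc ((3:ℝ) / 2 ^ (m + k + 2)) (1 / 2 ^ (m + k))) :=
        measure_iUnion_le _
    _ = ∑' k : ℕ, ENNReal.ofReal (((1:ℝ)/2)^(m+k+2)) := by
        refine tsum_congr fun k => ?_
        rw [Real.volume_Icc]
        congr 1
        rw [div_pow, one_pow]
        rw [show (2:ℝ)^(m+k+2) = 2^(m+k)*4 by ring]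
        field_simp
        ring
    _ = ENNReal.ofReal (∑' k : ℕ, ((1:ℝ)/2)^(m+k+2)) :=
        (ENNReal.ofReal_tsum_of_nonneg (fun k => by positivity) hsummable).symm
    _ ≤ ENNReal.ofReal (1 / 2 ^ (m + 1)) := by
        apply ENNReal.ofReal_le_ofReal
        have h1 : ∀ k:ℕ, ((1:ℝ)/2)^(m+k+2) = ((1:ℝ)/2)^(m+2) * ((1:ℝ)/2)^k := fun k => by
          rw [← pow_add]; congr 1; omega
        simp only [h1]
        rw [_root_.tsum_mul_left, tsum_geometric_of_lt_one (by norm_num) (by norm_num)]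
        apply le_of_eq
        rw [div_pow, one_pow, show (2:ℝ)^(m+2) = 2^(m+1)*2 by ring]
        norm_num
        ring

lemma pc (k : ℕ) : ((1:ℝ)/2)^k = 1/2^k := by rw [div_pow, one_pow]

lemma vol_main {b : ℝ} (hb : 0 ≤ b) :
    volume (SS ∩ Set.Icc 0 b) ≤ ENNReal.ofReal (b / 2) := by
  rcases eq_or_lt_of_le hb with rfl | hb'
  · have hsub : SS ∩ Set.Icc 0 0 ⊆ ({0} : Set ℝ) := by
      rintro x ⟨_, hx⟩; simpa using hx
    calc volume (SS ∩ Set.Icc 0 0) ≤ volume ({0} : Set ℝ) := measure_mono hsub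
      _ = 0 := Real.volume_singleton
      _ ≤ _ := zero_le
  rcases le_or_gt 1 b with h1b | h1b
  · have hs1 : SS ∩ Set.Icc 0 b ⊆ SS ∩ Set.Icc 0 ((1:ℝ)/2^(0:ℕ)) := by
      rintro x ⟨hxS, _, _⟩
      refine ⟨hxS, (SS_sub hxS).1, ?_⟩
      simpa using (SS_sub hxS).2
    have hs2 : (1:ℝ) / 2 ^ (0 + 1) ≤ b / 2 := by norm_num; linarith
    calc volume (SS ∩ Set.Icc 0 b) ≤ volume (SS ∩ Set.Icc 0 ((1:ℝ)/2^(0:ℕ))) :=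
        measure_mono hs1
      _ ≤ ENNReal.ofReal (1 / 2 ^ (0 + 1)) := vol_tail 0
      _ ≤ ENNReal.ofReal (b / 2) := ENNReal.ofReal_le_ofReal hs2
  · have hex : ∃ n : ℕ, ((1:ℝ)/2)^(n+1) ≤ b := by
      obtain ⟨n, hn⟩ := exists_pow_lt_of_lt_one hb' (by norm_num : (1:ℝ)/2 < 1)
      match n, hn with
      | 0, hn => simp at hn; linarith
      | (m+1), hn => exact ⟨m, hn.le⟩
    set N := Nat.find hex with hNdef
    have hN1 : ((1:ℝ)/2)^(N+1) ≤ b := Nat.find_spec hex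
    have hN2 : b ≤ ((1:ℝ)/2)^N := by
      rcases Nat.eq_zero_or_pos N with h | h
      · rw [h, pow_zero]; linarith
      · have hm := Nat.find_min hex (m := N - 1) (by omega)
        rw [show N - 1 + 1 = N by omega] at hm
        push_neg at hm
        exact hm.le
    have hsub : SS ∩ Set.Icc 0 b ⊆
        (SS ∩ Set.Icc 0 ((1:ℝ)/2^(N+1))) ∪ Set.Icc ((3:ℝ)/2^(N+2)) b := by
      rintro x ⟨hxS, hx0, hxb⟩
      rcases le_or_gt x ((1:ℝ)/2^(N+1)) with hle | hgt
      · exact Or.inl ⟨hxS, hx0, hle⟩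
      · right
        rcases hxS with h | h
        · exfalso
          simp only [Set.mem_singleton_iff] at h
          subst h
          have : (0:ℝ) < 1/2^(N+1) := by positivity
          linarith
        · simp only [Set.mem_iUnion, Set.mem_Icc] at h
          obtain ⟨k, hk1, hk2⟩ := h
          have hkN : k = N := by
            by_contra hne
            rcases Nat.lt_or_ge k N with hlt | hge
            · -- k < N : 3/2^(k+2) > (1/2)^N ≥ b ≥ x ≥ 3/2^(k+2)
              have hbig : ((1:ℝ)/2)^N < 3/2^(k+2) := by
                rw [pc, div_lt_div_iff₀ (by positivity) (by positivity)]
                have hpe : (2:ℝ)^(k+2) ≤ 2^(N+1) := pow_le_pow_right₀ one_le_two (by omega)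
                have h2m : (2:ℝ)^(N+1) = 2*2^N := by ring
                nlinarith [pow_pos (by norm_num : (0:ℝ)<2) N]
              linarith
            · -- k > N : x ≤ 1/2^k ≤ 1/2^(N+1) < x
              have hk' : N + 1 ≤ k := by omega
              have : (1:ℝ)/2^k ≤ 1/2^(N+1) := by
                apply one_div_le_one_div_of_le (by positivity)
                exact pow_le_pow_right₀ one_le_two hk'
              linarith
          subst hkN
          exact ⟨hk1, hxb⟩
    have step2 : volume (SS ∩ Set.Icc 0 b)
        ≤ ENNReal.ofReal (1/2^(N+2)) + ENNReal.ofReal (b - 3/2^(N+2)) := by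
      calc volume (SS ∩ Set.Icc 0 b)
          ≤ volume ((SS ∩ Set.Icc 0 ((1:ℝ)/2^(N+1))) ∪ Set.Icc ((3:ℝ)/2^(N+2)) b) :=
            measure_mono hsub
        _ ≤ volume (SS ∩ Set.Icc 0 ((1:ℝ)/2^(N+1))) + volume (Set.Icc ((3:ℝ)/2^(N+2)) b) :=
            measure_union_le _ _
        _ ≤ ENNReal.ofReal (1/2^(N+2)) + ENNReal.ofReal (b - 3/2^(N+2)) := by
            apply add_le_add (vol_tail (N+1))
            rw [Real.volume_Icc]
    refine step2.trans ?_
    have hu0 : (0:ℝ) < 1/2^(N+2) := by positivity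
    set u : ℝ := 1/2^(N+2) with hu
    have e3 : (3:ℝ)/2^(N+2) = 3*u := by rw [hu]; ring
    have hN1' : 2*u ≤ b := by
      have e : ((1:ℝ)/2)^(N+1) = 2*u := by
        rw [hu, pc, show (2:ℝ)^(N+2) = 2^(N+1)*2 by ring]
        field_simp
      linarith [hN1]
    have hN2' : b ≤ 4*u := by
      have e : ((1:ℝ)/2)^N = 4*u := by
        rw [hu, pc, show (2:ℝ)^(N+2) = 2^N*4 by ring]
        field_simp
      linarith [hN2]
    rw [e3]
    rcases le_or_gt b (3*u) with hcase | hcase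
    · rw [ENNReal.ofReal_eq_zero.mpr (by linarith : b - 3*u ≤ 0), add_zero]
      exact ENNReal.ofReal_le_ofReal (by linarith)
    · rw [← ENNReal.ofReal_add hu0.le (by linarith : (0:ℝ) ≤ b - 3*u)]
      exact ENNReal.ofReal_le_ofReal (by linarith)


def mfset (x : ℝ) : Set ℝ :=
  {r : ℝ | ∃ a b : ℝ, a < b ∧ Set.Icc a b ⊆ Set.univ ∧ x ∈ Set.Icc a b ∧
    r = (∫ y in Set.Icc a b, |ff y|) / (b - a)}

lemma avg_le_one {a b : ℝ} (hab : a < b) :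
    (∫ y in Set.Icc a b, |ff y|) / (b - a) ≤ 1 := by
  rw [integral_abs_ff, div_le_one (by linarith)]
  exact ENNReal.toReal_le_of_le_ofReal (by linarith) (vol_le a b)

lemma mfset_bdd (x : ℝ) : BddAbove (mfset x) := by
  refine ⟨1, ?_⟩
  rintro r ⟨a, b, hab, -, -, rfl⟩
  exact avg_le_one hab


lemma mf_le_one (x : ℝ) : mf Set.univ ff x ≤ 1 := by
  apply Real.sSup_le ?_ zero_le_one
  rintro r ⟨a, b, hab, -, -, rfl⟩
  exact avg_le_one hab

lemma mf_nonneg (x : ℝ) : 0 ≤ mf Set.univ ff x := by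
  apply Real.sSup_nonneg
  rintro r ⟨a, b, hab, -, -, rfl⟩
  refine div_nonneg ?_ (by linarith)
  rw [integral_abs_ff]
  exact ENNReal.toReal_nonneg

lemma one_le_mf (k : ℕ) : 1 ≤ mf Set.univ ff ((1:ℝ)/2^k) := by
  have hlt : (3:ℝ)/2^(k+2) < 1/2^k := by
    rw [div_lt_div_iff₀ (by positivity) (by positivity)]
    have h2m : (2:ℝ)^(k+2) = 2^k*4 := by ring
    nlinarith [pow_pos (by norm_num : (0:ℝ)<2) k]
  apply le_csSup (mfset_bdd _)
  refine ⟨3/2^(k+2), 1/2^k, hlt, Set.subset_univ _, ⟨hlt.le, le_refl _⟩, ?_⟩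
  have hss : SS ∩ Set.Icc ((3:ℝ)/2^(k+2)) (1/2^k) = Set.Icc ((3:ℝ)/2^(k+2)) (1/2^k) :=
    Set.inter_eq_self_of_subset_right (fun y hy => Or.inr (Set.mem_iUnion.2 ⟨k, hy⟩))
  rw [integral_abs_ff, hss, Real.volume_Icc, ENNReal.toReal_ofReal (by linarith),
    div_self (by linarith)]

lemma mf_zero : mf Set.univ ff 0 ≤ 1/2 := by
  apply Real.sSup_le ?_ (by norm_num)
  rintro r ⟨a, b, hab, -, ⟨ha0, hb0⟩, rfl⟩
  rw [integral_abs_ff]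
  have hkey : volume (SS ∩ Set.Icc a b) ≤ ENNReal.ofReal (b/2) := by
    refine (measure_mono ?_).trans (vol_main hb0)
    rintro x ⟨hxS, -, hxb⟩
    exact ⟨hxS, (SS_sub hxS).1, hxb⟩
  have h2 : (volume (SS ∩ Set.Icc a b)).toReal ≤ b/2 :=
    ENNReal.toReal_le_of_le_ofReal (by linarith) hkey
  rw [div_le_iff₀ (by linarith : (0:ℝ) < b - a)]
  linarith

lemma limsup_eq_one :
    Filter.limsup (mf Set.univ ff) (nhdsWithin 0 {(0:ℝ)}ᶜ) = 1 := by
  have hbdd : Filter.IsBoundedUnder (· ≤ ·) (nhdsWithin (0:ℝ) {(0:ℝ)}ᶜ) (mf Set.univ ff) :=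
    Filter.isBoundedUnder_of ⟨1, fun x => mf_le_one x⟩
  have hcob : Filter.IsCoboundedUnder (· ≤ ·) (nhdsWithin (0:ℝ) {(0:ℝ)}ᶜ) (mf Set.univ ff) :=
    Filter.isCoboundedUnder_le_of_le _ (fun x => mf_nonneg x)
  refine le_antisymm (Filter.limsup_le_of_le hcob (Filter.Eventually.of_forall mf_le_one)) ?_
  apply Filter.le_limsup_of_frequently_le ?_ hbdd
  have htend : Filter.Tendsto (fun k : ℕ => (1:ℝ)/2^k) Filter.atTop
      (nhdsWithin 0 {(0:ℝ)}ᶜ) := by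
    apply tendsto_nhdsWithin_of_tendsto_nhds_of_eventually_within
    · have h := tendsto_pow_atTop_nhds_zero_of_lt_one (by norm_num : (0:ℝ) ≤ 1/2)
        (by norm_num : (1:ℝ)/2 < 1)
      exact h.congr fun k => pc k
    · refine Filter.Eventually.of_forall fun k => ?_
      simp only [Set.mem_compl_iff, Set.mem_singleton_iff]
      exact (by positivity : (0:ℝ) < 1/2^k).ne'
  exact htend.frequently (Filter.Frequently.of_forall fun k => one_le_mf k)

end Stmt14Aux

/-- The characteristic function of `{0} ∪ ⋃ₙ [3/2^(n+2), 1/2^n]` has `Mf(0) ≤ 1/2`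
while `limsup_{x→0} Mf(x) = 1`; hence `Mf` is discontinuous at `0`. -/
theorem stmt14 :
    mf Set.univ
        (Set.indicator ({0} ∪ ⋃ n : ℕ, Set.Icc (3 / 2 ^ (n + 2)) (1 / 2 ^ n))
          (fun _ => (1 : ℝ))) 0 ≤ 1 / 2 ∧
    Filter.limsup
        (mf Set.univ
          (Set.indicator ({0} ∪ ⋃ n : ℕ, Set.Icc (3 / 2 ^ (n + 2)) (1 / 2 ^ n))
            (fun _ => (1 : ℝ))))
        (nhdsWithin 0 {(0:ℝ)}ᶜ) = 1 ∧
    ¬ ContinuousAt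
        (mf Set.univ
          (Set.indicator ({0} ∪ ⋃ n : ℕ, Set.Icc (3 / 2 ^ (n + 2)) (1 / 2 ^ n))
            (fun _ => (1 : ℝ)))) 0 := by
  show mf Set.univ Stmt14Aux.ff 0 ≤ 1/2 ∧
    Filter.limsup (mf Set.univ Stmt14Aux.ff) (nhdsWithin 0 {(0:ℝ)}ᶜ) = 1 ∧
    ¬ ContinuousAt (mf Set.univ Stmt14Aux.ff) 0
  refine ⟨Stmt14Aux.mf_zero, Stmt14Aux.limsup_eq_one, ?_⟩
  intro hc
  have ht : Filter.Tendsto (mf Set.univ Stmt14Aux.ff) (nhdsWithin 0 {(0:ℝ)}ᶜ)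
      (nhds (mf Set.univ Stmt14Aux.ff 0)) :=
    hc.tendsto.mono_left nhdsWithin_le_nhds
  have h1 := ht.limsup_eq
  rw [Stmt14Aux.limsup_eq_one] at h1
  have h2 := Stmt14Aux.mf_zero
  rw [← h1] at h2
  norm_num at h2
end

section
/- Let I = (0,1). For every 1 ≤ p ≤ ∞ there exists f ∈ W^{1,p}((0,1)) with ‖Mf‖_{W^{1,p}((0,1))} < ‖f‖_{W^{1,p}((0,1))}. -/
open MeasureTheory Set Filter ENNReal NNReal

/-- Absolute continuity of `f` on the interval `I`. -/
def AbsCont (I : Set ℝ) (f : ℝ → ℝ) : Prop :=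
  ∀ ε > 0, ∃ δ > 0, ∀ n : ℕ, ∀ a b : Fin n → ℝ,
    (∀ i, a i ≤ b i ∧ Set.Icc (a i) (b i) ⊆ I) →
    (Pairwise fun i j => Disjoint (Set.Ioo (a i) (b i)) (Set.Ioo (a j) (b j))) →
    (∑ i, (b i - a i)) < δ → (∑ i, |f (b i) - f (a i)|) < ε

lemma int_abs (a b : ℝ) (ha : 0 < a) (hab : a ≤ b) :
    (∫ y in Set.Icc a b, |y|) = (b^2 - a^2)/2 := by
  rw [setIntegral_congr_fun measurableSet_Icc (g := fun y => y)
    (fun y hy => abs_of_pos (lt_of_lt_of_le ha hy.1))]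
  rw [integral_Icc_eq_integral_Ioc, ← intervalIntegral.integral_of_le hab, integral_id]

lemma avg_eq (a b : ℝ) (ha : 0 < a) (hab : a < b) :
    (∫ y in Set.Icc a b, |y|) / (b - a) = (a + b) / 2 := by
  rw [int_abs a b ha hab.le]
  have : b - a ≠ 0 := sub_ne_zero.2 hab.ne'
  field_simp
  ring

lemma mf_id (x : ℝ) (hx : x ∈ Set.Ioo (0:ℝ) 1) : mf (Set.Ioo 0 1) id x = (x+1)/2 := by
  obtain ⟨hx0, hx1⟩ := hx
  apply csSup_eq_of_forall_le_of_forall_lt_exists_gt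
  · refine ⟨(x + (x+1)/2)/2, x, (x+1)/2, by linarith, ?_, ?_, ?_⟩
    · intro y hy
      exact ⟨lt_of_lt_of_le hx0 hy.1, lt_of_le_of_lt hy.2 (by linarith)⟩
    · exact ⟨le_refl x, by linarith⟩
    · simp only [id]
      rw [avg_eq x ((x+1)/2) hx0 (by linarith)]
  · rintro r ⟨a, b, hab, hsub, hmem, rfl⟩
    have ha0 : 0 < a := (hsub ⟨le_refl a, hab.le⟩).1
    have hb1 : b < 1 := (hsub ⟨hab.le, le_refl b⟩).2
    simp only [id]
    rw [avg_eq a b ha0 hab]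
    have := hmem.1
    linarith
  · intro w hw
    obtain ⟨b, hb1, hxb, hwb⟩ : ∃ b : ℝ, b < 1 ∧ x < b ∧ 2*w - x < b := by
      refine ⟨(max x (2*w - x) + 1)/2, ?_, ?_, ?_⟩
      · have : max x (2*w-x) < 1 := max_lt hx1 (by linarith)
        linarith
      · have : x ≤ max x (2*w-x) := le_max_left _ _
        have h2 : max x (2*w-x) < 1 := max_lt hx1 (by linarith)
        linarith
      · have : 2*w - x ≤ max x (2*w-x) := le_max_right _ _
        have h2 : max x (2*w-x) < 1 := max_lt hx1 (by linarith)
        linarith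
    refine ⟨(x + b)/2, ⟨x, b, hxb, ?_, ⟨le_refl x, hxb.le⟩,
      (by simp only [id]; exact (avg_eq x b hx0 hxb).symm)⟩, by linarith⟩
    intro y hy
    exact ⟨lt_of_lt_of_le hx0 hy.1, lt_of_le_of_lt hy.2 hb1⟩

/-- For every `1 ≤ p ≤ ∞` there is `f ∈ W^{1,p}((0,1))` with
`‖Mf‖_{W^{1,p}((0,1))} < ‖f‖_{W^{1,p}((0,1))}`.  Here `g` is the (a.e.) derivative of
`f` and `h` the (a.e.) derivative of `Mf`. -/
theorem stmt15 (p : ℝ≥0∞) (hp : 1 ≤ p) :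
    ∃ f g h : ℝ → ℝ,
      AbsCont (Set.Ioo 0 1) f ∧
      (∀ᵐ x ∂(volume : Measure ℝ), x ∈ Set.Ioo (0:ℝ) 1 → HasDerivAt f (g x) x) ∧
      eLpNorm f p (volume.restrict (Set.Ioo (0:ℝ) 1)) < ⊤ ∧
      eLpNorm g p (volume.restrict (Set.Ioo (0:ℝ) 1)) < ⊤ ∧
      AbsCont (Set.Ioo 0 1) (mf (Set.Ioo 0 1) f) ∧
      (∀ᵐ x ∂(volume : Measure ℝ), x ∈ Set.Ioo (0:ℝ) 1 →
        HasDerivAt (mf (Set.Ioo 0 1) f) (h x) x) ∧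
      eLpNorm (mf (Set.Ioo 0 1) f) p (volume.restrict (Set.Ioo (0:ℝ) 1)) +
          eLpNorm h p (volume.restrict (Set.Ioo (0:ℝ) 1)) <
        eLpNorm f p (volume.restrict (Set.Ioo (0:ℝ) 1)) +
          eLpNorm g p (volume.restrict (Set.Ioo (0:ℝ) 1)) := by
  refine ⟨id, fun _ => 1, fun _ => (1:ℝ)/2, ?_, ?_, ?_, ?_, ?_, ?_, ?_⟩
  -- AbsCont id
  · intro ε hε
    refine ⟨ε, hε, fun n a b hab _ hsum => ?_⟩
    calc ∑ i, |id (b i) - id (a i)| = ∑ i, (b i - a i) := by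
          refine Finset.sum_congr rfl fun i _ => ?_
          simp only [id]
          exact abs_of_nonneg (by linarith [(hab i).1])
      _ < ε := hsum
  -- derivative of id
  · filter_upwards with x _
    exact hasDerivAt_id x
  -- eLpNorm id < ⊤
  · have : eLpNorm (id : ℝ → ℝ) p (volume.restrict (Set.Ioo (0:ℝ) 1)) ≤ 1 := by
      have h1 : eLpNorm (fun _ : ℝ => (1:ℝ)) p (volume.restrict (Set.Ioo (0:ℝ) 1)) = 1 := by
        rw [eLpNorm_const (1:ℝ) (by positivity) (by
          intro h
          have := congrArg (fun m : Measure ℝ => m Set.univ) h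
          simp [Real.volume_Ioo] at this)]
        simp [Real.volume_Ioo]
      rw [← h1]
      apply eLpNorm_mono_ae
      filter_upwards [ae_restrict_mem measurableSet_Ioo] with x hx
      simp only [id, Real.norm_eq_abs]
      rw [abs_of_pos hx.1, abs_one]
      exact hx.2.le
    exact lt_of_le_of_lt this one_lt_top
  -- eLpNorm const 1 < ⊤
  · have h1 : eLpNorm (fun _ : ℝ => (1:ℝ)) p (volume.restrict (Set.Ioo (0:ℝ) 1)) = 1 := by
      rw [eLpNorm_const (1:ℝ) (by positivity) (by
        intro h
        have := congrArg (fun m : Measure ℝ => m Set.univ) h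
        simp [Real.volume_Ioo] at this)]
      simp [Real.volume_Ioo]
    rw [h1]; exact one_lt_top
  -- AbsCont mf
  · intro ε hε
    refine ⟨ε, hε, fun n a b hab _ hsum => ?_⟩
    have key : ∀ i, |mf (Set.Ioo 0 1) id (b i) - mf (Set.Ioo 0 1) id (a i)| ≤ b i - a i := by
      intro i
      obtain ⟨hle, hsub⟩ := hab i
      have hai : a i ∈ Set.Ioo (0:ℝ) 1 := hsub ⟨le_refl _, hle⟩
      have hbi : b i ∈ Set.Ioo (0:ℝ) 1 := hsub ⟨hle, le_refl _⟩
      rw [mf_id _ hbi, mf_id _ hai, abs_of_nonneg (by linarith)]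
      linarith
    calc ∑ i, |mf (Set.Ioo 0 1) id (b i) - mf (Set.Ioo 0 1) id (a i)|
        ≤ ∑ i, (b i - a i) := Finset.sum_le_sum fun i _ => key i
      _ < ε := hsum
  -- derivative of mf
  · filter_upwards with x hx
    have hd : HasDerivAt (fun y : ℝ => (y+1)/2) ((1:ℝ)/2) x := by
      have := ((hasDerivAt_id x).add_const (1:ℝ)).div_const 2
      simpa using this
    apply hd.congr_of_eventuallyEq
    filter_upwards [Ioo_mem_nhds hx.1 hx.2] with y hy
    exact mf_id y hy
  -- the norm inequality
  · set μ := (volume : Measure ℝ).restrict (Set.Ioo (0:ℝ) 1) with hμdef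
    have hp0 : p ≠ 0 := by positivity
    have hμuniv : μ Set.univ = 1 := by
      rw [hμdef, Measure.restrict_apply_univ, Real.volume_Ioo]; norm_num
    have hμ0 : μ ≠ 0 := by
      intro h; rw [h] at hμuniv; simp at hμuniv
    have hB : eLpNorm (fun _ : ℝ => (1:ℝ)) p μ = 1 := by
      rw [eLpNorm_const (1:ℝ) hp0 hμ0, hμuniv]; simp
    have hH : eLpNorm (fun _ : ℝ => (1:ℝ)/2) p μ = 1/2 := by
      rw [eLpNorm_const ((1:ℝ)/2) hp0 hμ0, hμuniv, ENNReal.one_rpow, mul_one]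
      have : ‖(1:ℝ)/2‖₊ = (1/2 : ℝ≥0) := by ext; simp [Real.nnnorm_of_nonneg]
      rw [enorm_eq_nnnorm, this]
      simp [ENNReal.coe_div]
    set A := eLpNorm (id : ℝ → ℝ) p μ with hAdef
    have hAle : A ≤ 1 := by
      rw [← hB]
      apply eLpNorm_mono_ae
      filter_upwards [ae_restrict_mem measurableSet_Ioo] with x hx
      simp only [id, Real.norm_eq_abs]
      rw [abs_of_pos hx.1, abs_one]
      exact hx.2.le
    have hAtop : A ≠ ⊤ := ne_top_of_le_ne_top one_ne_top hAle
    have hA0 : A ≠ 0 := by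
      intro h
      rw [hAdef, eLpNorm_eq_zero_iff aestronglyMeasurable_id hp0] at h
      have hz : μ {x : ℝ | ¬ id x = 0} = 0 := by
        rw [Filter.EventuallyEq, ae_iff] at h
        simpa using h
      have h1 : μ (Set.Ioo (1/2 : ℝ) 1) ≤ μ {x : ℝ | ¬ id x = 0} := by
        apply measure_mono
        intro y hy
        simp only [Set.mem_setOf_eq, id]
        intro h'
        rw [h'] at hy
        norm_num at hy
      rw [hz] at h1
      have h2 : μ (Set.Ioo (1/2 : ℝ) 1) = 1/2 := by
        rw [hμdef, Measure.restrict_apply measurableSet_Ioo, Set.Ioo_inter_Ioo]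
        norm_num [Real.volume_Ioo, ENNReal.ofReal_div_of_pos]
      rw [h2] at h1
      simp at h1
    -- mf equals (x+1)/2 a.e. on μ
    have hmfae : mf (Set.Ioo 0 1) id =ᵐ[μ] fun x => (x+1)/2 := by
      filter_upwards [ae_restrict_mem measurableSet_Ioo] with x hx
      exact mf_id x hx
    have hEcongr : eLpNorm (mf (Set.Ioo 0 1) id) p μ = eLpNorm (fun x : ℝ => (x+1)/2) p μ :=
      eLpNorm_congr_ae hmfae
    have hEle : eLpNorm (fun x : ℝ => (x+1)/2) p μ ≤ A/2 + 1/2 := by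
      have heq : (fun x : ℝ => (x+1)/2) = (1/2 : ℝ) • (fun x : ℝ => x + 1) := by
        funext x; simp [smul_eq_mul]; ring
      rw [heq, eLpNorm_const_smul]
      have hc : (‖(1:ℝ)/2‖₊ : ℝ≥0∞) = 1/2 := by
        have : ‖(1:ℝ)/2‖₊ = (1/2 : ℝ≥0) := by ext; simp [Real.nnnorm_of_nonneg]
        rw [this]; simp [ENNReal.coe_div]
      have hadd : eLpNorm (fun x : ℝ => x + 1) p μ ≤ A + 1 := by
        have := eLpNorm_add_le (aestronglyMeasurable_id (μ := μ))
          (aestronglyMeasurable_const (b := (1:ℝ))) hp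
        calc eLpNorm (fun x : ℝ => x + 1) p μ
            = eLpNorm ((id : ℝ → ℝ) + fun _ : ℝ => (1:ℝ)) p μ := rfl
          _ ≤ A + eLpNorm (fun _ : ℝ => (1:ℝ)) p μ := this
          _ = A + 1 := by rw [hB]
      calc (‖(1:ℝ)/2‖₊ : ℝ≥0∞) • eLpNorm (fun x : ℝ => x + 1) p μ
          = (1/2 : ℝ≥0∞) * eLpNorm (fun x : ℝ => x + 1) p μ := by rw [← hc]; rfl
        _ ≤ (1/2 : ℝ≥0∞) * (A + 1) := by
            exact mul_le_mul_right hadd _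
        _ = A/2 + 1/2 := by
            rw [ENNReal.div_eq_inv_mul, ENNReal.div_eq_inv_mul, mul_one, mul_add, mul_one]
    rw [hEcongr, hB, hH]
    calc eLpNorm (fun x : ℝ => (x+1)/2) p μ + 1/2
        ≤ (A/2 + 1/2) + 1/2 := add_le_add_left hEle _
      _ = A/2 + 1 := by rw [add_assoc, ENNReal.add_halves]
      _ < A + 1 := ENNReal.add_lt_add_right one_ne_top (ENNReal.half_lt_self hA0 hAtop)
end

section
/- If f : I → ℝ is Lipschitz, then Mf is Lipschitz with Lip(Mf) ≤ Lip(f); equivalently ‖DMf‖_∞ ≤ ‖Df‖_∞. -/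
open MeasureTheory Set Filter ENNReal NNReal

lemma mf_key (I : Set ℝ) (hI : I.OrdConnected) (f : ℝ → ℝ) (K : ℝ≥0)
    (hf : LipschitzOnWith K f I) {x y a b : ℝ} (hy : y ∈ I)
    (hab : a < b) (hsub : Set.Icc a b ⊆ I) (hx : x ∈ Set.Icc a b) :
    ∃ a' b', a' < b' ∧ Set.Icc a' b' ⊆ I ∧ y ∈ Set.Icc a' b' ∧
      (∫ t in Set.Icc a b, |f t|) / (b - a) ≤
        (∫ t in Set.Icc a' b', |f t|) / (b' - a') + K * |x - y| := by
  set a' := min a y with ha'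
  set b' := max b y with hb'
  have ha'a : a' ≤ a := min_le_left _ _
  have hbb' : b ≤ b' := le_max_left _ _
  have ha'y : a' ≤ y := min_le_right _ _
  have hyb' : y ≤ b' := le_max_right _ _
  have hab' : a' < b' := lt_of_le_of_lt ha'a (hab.trans_le hbb')
  have haI : a ∈ I := hsub ⟨le_refl _, hab.le⟩
  have hbI : b ∈ I := hsub ⟨hab.le, le_refl _⟩
  have ha'I : a' ∈ I := by
    rcases le_total a y with h | h
    · rw [ha', min_eq_left h]; exact haI
    · rw [ha', min_eq_right h]; exact hy
  have hb'I : b' ∈ I := by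
    rcases le_total b y with h | h
    · rw [hb', max_eq_right h]; exact hy
    · rw [hb', max_eq_left h]; exact hbI
  have hsub' : Set.Icc a' b' ⊆ I := hI.out ha'I hb'I
  refine ⟨a', b', hab', hsub', ⟨ha'y, hyb'⟩, ?_⟩
  set A := (∫ t in Set.Icc a b, |f t|) / (b - a) with hA
  have hL : (0:ℝ) < b - a := by linarith
  have hL' : (0:ℝ) < b' - a' := by linarith
  have cont : ContinuousOn (fun t => |f t|) I := hf.continuousOn.abs
  -- pointwise lower bound on [a', b']
  have ptw : ∀ t ∈ Set.Icc a' b', A - K * (b' - a') ≤ |f t| := by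
    intro t ht
    have htI : t ∈ I := hsub' ht
    have h1 : ∀ s ∈ Set.Icc a b, |f s| ≤ |f t| + K * (b' - a') := by
      intro s hs
      have hd : dist (f s) (f t) ≤ K * dist s t := hf.dist_le_mul s (hsub hs) t htI
      rw [Real.dist_eq, Real.dist_eq] at hd
      have hst : |s - t| ≤ b' - a' := by
        rw [abs_sub_le_iff]
        constructor <;> [skip; skip] <;>
          first
          | (have := hs.1; have := hs.2; have := ht.1; have := ht.2; linarith)
      have : |f s| - |f t| ≤ |f s - f t| := abs_sub_abs_le_abs_sub _ _
      nlinarith [K.coe_nonneg]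
    have hint : IntegrableOn (fun t => |f t|) (Set.Icc a b) :=
      (cont.mono hsub).integrableOn_Icc
    have h2 : (∫ s in Set.Icc a b, |f s|) ≤ (∫ _ in Set.Icc a b, (|f t| + K * (b' - a'))) :=
      setIntegral_mono_on hint (integrableOn_const (by rw [Real.volume_Icc]; exact ENNReal.ofReal_ne_top))
        measurableSet_Icc h1
    rw [setIntegral_const, measureReal_def, Real.volume_Icc, ENNReal.toReal_ofReal hL.le, smul_eq_mul] at h2
    rw [hA, sub_le_iff_le_add, div_le_iff₀ hL]
    nlinarith
  -- interval integrability
  have intOn : ∀ {c d : ℝ}, c ≤ d → Set.Icc c d ⊆ Set.Icc a' b' →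
      IntervalIntegrable (fun t => |f t|) volume c d := by
    intro c d hcd hs
    exact (cont.mono (hs.trans hsub')).intervalIntegrable_of_Icc hcd
  have hsubab : Set.Icc a b ⊆ Set.Icc a' b' := Set.Icc_subset_Icc ha'a hbb'
  have int1 : IntervalIntegrable (fun t => |f t|) volume a' a :=
    intOn ha'a (Set.Icc_subset_Icc (le_refl _) (hab.le.trans hbb'))
  have int2 : IntervalIntegrable (fun t => |f t|) volume a b :=
    intOn hab.le hsubab
  have int3 : IntervalIntegrable (fun t => |f t|) volume b b' :=
    intOn hbb' (Set.Icc_subset_Icc (ha'a.trans hab.le) (le_refl _))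
  have esplit : (∫ t in Set.Icc a' b', |f t|) =
      (∫ t in a'..a, |f t|) + (∫ t in a..b, |f t|) + (∫ t in b..b', |f t|) := by
    rw [integral_Icc_eq_integral_Ioc, ← intervalIntegral.integral_of_le hab'.le,
      ← intervalIntegral.integral_add_adjacent_intervals (int1.trans int2) int3,
      ← intervalIntegral.integral_add_adjacent_intervals int1 int2]
  have emid : (∫ t in a..b, |f t|) = (b - a) * A := by
    rw [hA, intervalIntegral.integral_of_le hab.le, ← integral_Icc_eq_integral_Ioc]
    field_simp
  -- lower bounds on side pieces
  have lb : ∀ {c d : ℝ}, c ≤ d → Set.Icc c d ⊆ Set.Icc a' b' →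
      (d - c) * (A - K * (b' - a')) ≤ ∫ t in c..d, |f t| := by
    intro c d hcd hs
    have : (∫ _ in c..d, (A - K * (b' - a'))) ≤ ∫ t in c..d, |f t| := by
      apply intervalIntegral.integral_mono_on hcd (by simp) (intOn hcd hs)
      intro u hu
      exact ptw u (hs hu)
    rwa [intervalIntegral.integral_const, smul_eq_mul] at this
  have lb1 := lb ha'a (Set.Icc_subset_Icc (le_refl _) (hab.le.trans hbb'))
  have lb3 := lb hbb' (Set.Icc_subset_Icc (ha'a.trans hab.le) (le_refl _))
  -- distance bound
  have hd : (a - a') + (b' - b) ≤ |x - y| := by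
    rcases le_total y a with h | h
    · rw [ha', min_eq_right h, hb', max_eq_left (h.trans hab.le)]
      have : x - y ≥ 0 := by linarith [hx.1]
      rw [abs_of_nonneg this]; linarith [hx.1]
    · rw [ha', min_eq_left h]
      rcases le_total y b with h2 | h2
      · rw [hb', max_eq_left h2]
        simp [abs_nonneg]
      · rw [hb', max_eq_right h2]
        have : x - y ≤ 0 := by linarith [hx.2]
        rw [abs_of_nonpos this]; linarith [hx.2]
  -- combine
  have total : (b' - a') * (A - K * ((a - a') + (b' - b))) ≤ ∫ t in Set.Icc a' b', |f t| := by
    rw [esplit]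
    nlinarith [K.coe_nonneg]
  have h5 : A - K * ((a - a') + (b' - b)) ≤ (∫ t in Set.Icc a' b', |f t|) / (b' - a') := by
    rw [le_div_iff₀ hL']
    nlinarith [total]
  have hK := K.coe_nonneg
  have h6 : (K:ℝ) * ((a - a') + (b' - b)) ≤ K * |x - y| := mul_le_mul_of_nonneg_left hd hK
  linarith

/-- If `f` is Lipschitz on the interval `I` with constant `K`, then so is `Mf`:
`Lip(Mf) ≤ Lip(f)`. -/
theorem stmt18 (I : Set ℝ) (hI : I.OrdConnected) (hI' : I.Nontrivial)
    (f : ℝ → ℝ) (K : ℝ≥0) (hf : LipschitzOnWith K f I) :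
    LipschitzOnWith K (mf I f) I := by
  set S : ℝ → Set ℝ := fun x => {r : ℝ | ∃ a b : ℝ, a < b ∧ Set.Icc a b ⊆ I ∧ x ∈ Set.Icc a b ∧
    r = (∫ y in Set.Icc a b, |f y|) / (b - a)} with hS
  have hmf : ∀ x, mf I f x = sSup (S x) := fun x => rfl
  have hne : ∀ x ∈ I, (S x).Nonempty := by
    intro x hx
    obtain ⟨u, hu, v, hv, huv⟩ := hI'
    obtain ⟨z, hz, hzx⟩ : ∃ z ∈ I, z ≠ x := by
      by_cases h : u = x
      · exact ⟨v, hv, fun hh => huv (h ▸ hh ▸ rfl)⟩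
      · exact ⟨u, hu, h⟩
    have hmm : min x z < max x z := min_lt_max.2 (Ne.symm hzx)
    have hmI : min x z ∈ I := by
      rcases le_total x z with h | h
      · rwa [min_eq_left h]
      · rwa [min_eq_right h]
    have hMI : max x z ∈ I := by
      rcases le_total x z with h | h
      · rwa [max_eq_right h]
      · rwa [max_eq_left h]
    exact ⟨_, min x z, max x z, hmm, hI.out hmI hMI,
      ⟨min_le_left _ _, le_max_left _ _⟩, rfl⟩
  have key : ∀ x ∈ I, ∀ y ∈ I, ∀ r ∈ S x, ∃ r' ∈ S y, r ≤ r' + K * |x - y| := by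
    rintro x hx y hy r ⟨a, b, hab, hsub, hxab, rfl⟩
    obtain ⟨a', b', h1, h2, h3, h4⟩ := mf_key I hI f K hf hy hab hsub hxab
    exact ⟨_, ⟨a', b', h1, h2, h3, rfl⟩, h4⟩
  have main : ∀ x ∈ I, ∀ y ∈ I, mf I f x ≤ mf I f y + K * |x - y| := by
    intro x hx y hy
    rw [hmf, hmf]
    by_cases hb : BddAbove (S y)
    · apply csSup_le (hne x hx)
      rintro r hr
      obtain ⟨r', hr', hle⟩ := key x hx y hy r hr
      exact hle.trans (by linarith [le_csSup hb hr'])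
    · have hbx : ¬ BddAbove (S x) := by
        rintro ⟨M, hM⟩
        apply hb
        refine ⟨M + K * |y - x|, ?_⟩
        rintro r hr
        obtain ⟨r', hr', hle⟩ := key y hy x hx r hr
        linarith [hM hr']
      rw [Real.sSup_of_not_bddAbove hb, Real.sSup_of_not_bddAbove hbx]
      positivity
  rw [lipschitzOnWith_iff_dist_le_mul]
  intro x hx y hy
  rw [Real.dist_eq, Real.dist_eq]
  have h1 := main x hx y hy
  have h2 := main y hy x hx
  rw [abs_sub_comm y x] at h2
  rw [abs_sub_le_iff]
  constructor <;> linarith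
end
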